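/- Suppose conditions (C1)–(C3) hold for the piecewise linear surrogates φ⁺, φ⁻, and assume the margin condition with constants A ≥ 1 and α > 0. Then for every B > 0 there exists a constant B′ > 0 (depending on the coefficients, A, α, and B) such that for every measurable f : 𝒳 → ℝ with |f(x)| ≤ B for all x ∈ 𝒳: E₂(f) ≤ B′·(E₁(f))^{α/(1+α)}, where E₁(f) = ∫ [ p(x)·(φ⁺(f(x)) − φ⁺(t*_{p(x)})) + (1−p(x))·(φ⁻(−f(x)) − φ⁻(−t*_{p(x)})) ] dμ(x) and E₂(f) = ∫ [ p(x)·(φ⁺(f(x)) − φ⁺(t*_{p(x)}))² + (1−p(x))·(φ⁻(−f(x)) − φ⁻(−t*_{p(x)}))² ] dμ(x). (That is, the class of excess-loss functions over uniformly bounded f is a Bernstein class with exponent β = α/(1+α).) -/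

import Mathlib

/-!
For fixed `q = p x`, the conditional risk `z ↦ q φ⁺(z) + (1 - q) φ⁻(-z)` is convex and piecewise
linear, minimised at `t*_q`, and by (C3) its slope on the `j`-th piece is
`(B⁺_j + B⁻_j)(q - π_j)`. So if `q` is `t`-far from every `π_j`, the excess grows at least like
`c t |z - t*_q|` with `c = min_j |B⁺_j + B⁻_j|`, while the absolute excesses
`|φ^±(±z) - φ^±(±t*_q)|` grow at most like `L |z - t*_q|` with `L ≥ |B^±_j|` (on the flat pieces
beyond the outer hinges excess and absolute excess coincide). For `|f| ≤ B` the absolute excesses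
are bounded by some `M`, so squared excesses are at most `M` times absolute ones. Splitting `𝒳`
into the `t`-far points and the rest, of measure `≤ K A t^α` by the margin condition, gives
`E₂ ≤ M (1 + L/(c t)) E₁ + M² K A t^α` for all small `t`; then take `t ≍ E₁^{1/(1+α)}`.
-/

open MeasureTheory

/-- Piecewise linear surrogate `φ(z) = max{0, max_{1≤k≤K} (A_k + B_k·z)}`. -/
noncomputable def phiPL (K : ℕ) (A B : ℕ → ℝ) (z : ℝ) : ℝ :=
  (Finset.Icc 1 K).fold max 0 fun k => A k + B k * z

/-- First-moment excess surrogate risk functional `E₁(f)`. -/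
noncomputable def exc1 {X : Type*} [MeasurableSpace X] (μ : Measure X)
    (K : ℕ) (Ap Bp Am Bm : ℕ → ℝ) (tst : ℝ → ℝ) (p : X → ℝ) (f : X → ℝ) : ℝ :=
  ∫ x, (p x * (phiPL K Ap Bp (f x) - phiPL K Ap Bp (tst (p x)))
    + (1 - p x) * (phiPL K Am Bm (-(f x)) - phiPL K Am Bm (-(tst (p x))))) ∂μ

/-- Second-moment excess surrogate risk functional `E₂(f)`. -/
noncomputable def exc2 {X : Type*} [MeasurableSpace X] (μ : Measure X)
    (K : ℕ) (Ap Bp Am Bm : ℕ → ℝ) (tst : ℝ → ℝ) (p : X → ℝ) (f : X → ℝ) : ℝ :=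
  ∫ x, (p x * (phiPL K Ap Bp (f x) - phiPL K Ap Bp (tst (p x))) ^ 2
    + (1 - p x) * (phiPL K Am Bm (-(f x)) - phiPL K Am Bm (-(tst (p x)))) ^ 2) ∂μ

open Finset Filter Topology

theorem phiPL_le_iff {K : ℕ} {A B : ℕ → ℝ} {z c : ℝ} :
    phiPL K A B z ≤ c ↔ 0 ≤ c ∧ ∀ j ∈ Icc 1 K, A j + B j * z ≤ c :=
  fold_max_le _

theorem phiPL_nonneg (K : ℕ) (A B : ℕ → ℝ) (z : ℝ) : 0 ≤ phiPL K A B z :=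
  (le_fold_max _).2 (Or.inl le_rfl)

theorem le_phiPL {K j : ℕ} (A B : ℕ → ℝ) (z : ℝ) (hj : j ∈ Icc 1 K) :
    A j + B j * z ≤ phiPL K A B z :=
  (le_fold_max _).2 (Or.inr ⟨j, hj, le_rfl⟩)

theorem phiPL_neg (K : ℕ) (A B : ℕ → ℝ) (z : ℝ) :
    phiPL K A B (-z) = phiPL K A (fun j => -B j) z := by
  simp only [phiPL, mul_neg, neg_mul]

theorem continuous_phiPL (K : ℕ) (A B : ℕ → ℝ) : Continuous (phiPL K A B) := by
  unfold phiPL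
  induction Icc 1 K using Finset.cons_induction with
  | empty => exact continuous_const
  | cons a s _ ih =>
    simp only [fold_cons]
    exact (continuous_const.add (continuous_const.mul continuous_id)).max ih

@[fun_prop]
theorem measurable_phiPL (K : ℕ) (A B : ℕ → ℝ) : Measurable (phiPL K A B) :=
  (continuous_phiPL K A B).measurable

theorem phiPL_antitone {K : ℕ} {A B : ℕ → ℝ} (hB : ∀ j ∈ Icc 1 K, B j ≤ 0) :
    Antitone (phiPL K A B) := fun z w hzw =>
  phiPL_le_iff.2 ⟨phiPL_nonneg K A B z, fun j hj =>
    (by nlinarith [hB j hj] : A j + B j * w ≤ A j + B j * z).trans (le_phiPL A B z hj)⟩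

theorem abs_phiPL_sub_le {K : ℕ} {A B : ℕ → ℝ} {L : ℝ} (hL0 : 0 ≤ L)
    (hL : ∀ j ∈ Icc 1 K, |B j| ≤ L) (z w : ℝ) :
    |phiPL K A B z - phiPL K A B w| ≤ L * |z - w| := by
  have key : ∀ z w, phiPL K A B z ≤ phiPL K A B w + L * |z - w| := fun z w =>
    phiPL_le_iff.2 ⟨by positivity [phiPL_nonneg K A B w], fun j hj => by
      have hline : B j * (z - w) ≤ L * |z - w| :=
        (le_abs_self _).trans ((abs_mul _ _).trans_le (by gcongr; exact hL j hj))
      linarith [le_phiPL A B w hj]⟩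
  rw [abs_sub_le_iff]
  exact ⟨by linarith [key z w], by rw [abs_sub_comm z w]; linarith [key w z]⟩

section Lines

variable {A B h : ℕ → ℝ} {z : ℝ} {i j : ℕ}

theorem line_le_line_of_crossing_le (hij : i ≤ j)
    (hB : ∀ k, i ≤ k → k < j → B k ≤ B (k + 1))
    (hcross : ∀ k, i ≤ k → k < j → A k + B k * h k = A (k + 1) + B (k + 1) * h k)
    (hz : ∀ k, i ≤ k → k < j → h k ≤ z) : A i + B i * z ≤ A j + B j * z := by
  induction j, hij using Nat.le_induction with
  | base => rfl
  | succ n hin ih =>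
    have hgap : A (n + 1) + B (n + 1) * z - (A n + B n * z) = (B (n + 1) - B n) * (z - h n) := by
      linear_combination -hcross n hin n.lt_succ_self
    have hstep := mul_nonneg (sub_nonneg.2 (hB n hin n.lt_succ_self))
      (sub_nonneg.2 (hz n hin n.lt_succ_self))
    exact (ih (fun k h₁ h₂ => hB k h₁ (by omega)) (fun k h₁ h₂ => hcross k h₁ (by omega))
      (fun k h₁ h₂ => hz k h₁ (by omega))).trans (by linarith)

theorem line_le_line_of_le_crossing (hij : i ≤ j)
    (hB : ∀ k, i ≤ k → k < j → B k ≤ B (k + 1))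
    (hcross : ∀ k, i ≤ k → k < j → A k + B k * h k = A (k + 1) + B (k + 1) * h k)
    (hz : ∀ k, i ≤ k → k < j → z ≤ h k) : A j + B j * z ≤ A i + B i * z := by
  induction j, hij using Nat.le_induction with
  | base => rfl
  | succ n hin ih =>
    have hgap : A (n + 1) + B (n + 1) * z - (A n + B n * z) = (B (n + 1) - B n) * (z - h n) := by
      linear_combination -hcross n hin n.lt_succ_self
    have hstep := mul_nonpos_of_nonneg_of_nonpos (sub_nonneg.2 (hB n hin n.lt_succ_self))
      (sub_nonpos.2 (hz n hin n.lt_succ_self))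
    exact (by linarith : A (n + 1) + B (n + 1) * z ≤ A n + B n * z).trans
      (ih (fun k h₁ h₂ => hB k h₁ (by omega)) (fun k h₁ h₂ => hcross k h₁ (by omega))
        (fun k h₁ h₂ => hz k h₁ (by omega)))

theorem phiPL_eq_line {K : ℕ} (hj : j ∈ Icc 1 K)
    (hB : ∀ k, 1 ≤ k → k < K → B k ≤ B (k + 1))
    (hcross : ∀ k, 1 ≤ k → k < K → A k + B k * h k = A (k + 1) + B (k + 1) * h k)
    (hlo : ∀ k, 1 ≤ k → k < j → h k ≤ z) (hhi : ∀ k, j ≤ k → k < K → z ≤ h k)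
    (hpos : 0 ≤ A j + B j * z) : phiPL K A B z = A j + B j * z := by
  obtain ⟨hj1, hjK⟩ := mem_Icc.1 hj
  refine le_antisymm (phiPL_le_iff.2 ⟨hpos, fun i hi => ?_⟩) (le_phiPL A B z hj)
  obtain ⟨hi1, hiK⟩ := mem_Icc.1 hi
  rcases le_total i j with hij | hji
  · exact line_le_line_of_crossing_le hij (fun k h₁ h₂ => hB k (by omega) (by omega))
      (fun k h₁ h₂ => hcross k (by omega) (by omega)) (fun k h₁ h₂ => hlo k (by omega) h₂)
  · exact line_le_line_of_le_crossing hji (fun k h₁ h₂ => hB k (by omega) (by omega))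
      (fun k h₁ h₂ => hcross k (by omega) (by omega)) (fun k h₁ h₂ => hhi k h₁ (by omega))

end Lines

/-- (C1)–(C2), read on `φ⁺` and on `z ↦ φ⁻(-z)`, whose lines have the increasing slopes `-B⁻_k`. -/
structure IsHingeSystem (K : ℕ) (Ap Bp Am Bm H : ℕ → ℝ) : Prop where
  plus_slope_mono : MonotoneOn Bp (Set.Icc 1 K)
  plus_slope_last_neg : Bp K < 0
  minus_slope_anti : AntitoneOn Bm (Set.Icc 1 K)
  minus_slope_first_neg : Bm 1 < 0
  plus_cross : ∀ k, 1 ≤ k → k < K → Ap k + Bp k * H k = Ap (k + 1) + Bp (k + 1) * H k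
  minus_cross : ∀ k, 1 ≤ k → k < K → Am k + -Bm k * H k = Am (k + 1) + -Bm (k + 1) * H k
  plus_last_zero : Ap K + Bp K * H K = 0
  minus_first_zero : Am 1 + -Bm 1 * H 0 = 0
  hinge_mono : MonotoneOn H (Set.Iic K)

theorem isHingeSystem_of_conditions {K : ℕ} {Ap Bp Am Bm H Hm : ℕ → ℝ}
    (hH0 : H 0 = Am 1 / Bm 1)
    (hHmid : ∀ k, 1 ≤ k → k ≤ K - 1 → H k = (Ap k - Ap (k + 1)) / (Bp (k + 1) - Bp k))
    (hHK : H K = -Ap K / Bp K)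
    (hHm : ∀ k, 1 ≤ k → k ≤ K - 1 → Hm k = (Am k - Am (k + 1)) / (Bm (k + 1) - Bm k))
    (hC1p : ∀ k, 1 ≤ k → k < K → Bp k < Bp (k + 1)) (hC1pK : Bp K < 0)
    (hC1m : ∀ k, 1 ≤ k → k < K → Bm (k + 1) < Bm k) (hC1m1 : Bm 1 < 0)
    (hC2a : ∀ k, 1 ≤ k → k ≤ K - 1 → -Hm k = H k)
    (hC2b : ∀ k, k < K → H k < H (k + 1)) :
    IsHingeSystem K Ap Bp Am Bm H where
  plus_slope_mono := monotoneOn_of_le_succ Set.ordConnected_Icc fun k _ hk hk1 => by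
    rw [Order.succ_eq_add_one] at hk1 ⊢
    exact (hC1p k hk.1 (by have := hk1.2; omega)).le
  plus_slope_last_neg := hC1pK
  minus_slope_anti := antitoneOn_of_succ_le Set.ordConnected_Icc fun k _ hk hk1 => by
    rw [Order.succ_eq_add_one] at hk1 ⊢
    exact (hC1m k hk.1 (by have := hk1.2; omega)).le
  minus_slope_first_neg := hC1m1
  plus_cross k hk1 hkK := by
    have : Bp (k + 1) - Bp k ≠ 0 := (sub_pos.2 (hC1p k hk1 hkK)).ne'
    rw [hHmid k hk1 (by omega)]
    field_simp
    ring
  minus_cross k hk1 hkK := by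
    have : Bm (k + 1) - Bm k ≠ 0 := (sub_neg.2 (hC1m k hk1 hkK)).ne
    rw [← hC2a k hk1 (by omega), hHm k hk1 (by omega)]
    field_simp
    ring
  plus_last_zero := by
    rw [hHK]
    field_simp [hC1pK.ne]
    ring
  minus_first_zero := by
    rw [hH0]
    field_simp [hC1m1.ne]
    ring
  hinge_mono := monotoneOn_of_le_succ Set.ordConnected_Iic fun k _ _ hk1 => by
    rw [Order.succ_eq_add_one] at hk1 ⊢
    exact (hC2b k hk1).le

namespace IsHingeSystem

variable {K : ℕ} {Ap Bp Am Bm H : ℕ → ℝ}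

theorem plus_slope_neg (hS : IsHingeSystem K Ap Bp Am Bm H) {j : ℕ} (hj : j ∈ Icc 1 K) :
    Bp j < 0 := by
  obtain ⟨hj1, hjK⟩ := mem_Icc.1 hj
  exact (hS.plus_slope_mono ⟨hj1, hjK⟩ ⟨hj1.trans hjK, le_rfl⟩ hjK).trans_lt
    hS.plus_slope_last_neg

theorem minus_slope_neg (hS : IsHingeSystem K Ap Bp Am Bm H) {j : ℕ} (hj : j ∈ Icc 1 K) :
    Bm j < 0 := by
  obtain ⟨hj1, hjK⟩ := mem_Icc.1 hj
  exact (hS.minus_slope_anti ⟨le_rfl, hj1.trans hjK⟩ ⟨hj1, hjK⟩ hj1).trans_lt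
    hS.minus_slope_first_neg

theorem plus_slope_step (hS : IsHingeSystem K Ap Bp Am Bm H) {k : ℕ} (hk1 : 1 ≤ k) (hkK : k < K) :
    Bp k ≤ Bp (k + 1) :=
  hS.plus_slope_mono ⟨hk1, hkK.le⟩ ⟨by omega, hkK⟩ k.le_succ

theorem minus_slope_step (hS : IsHingeSystem K Ap Bp Am Bm H) {k : ℕ} (hk1 : 1 ≤ k) (hkK : k < K) :
    -Bm k ≤ -Bm (k + 1) :=
  neg_le_neg (hS.minus_slope_anti ⟨hk1, hkK.le⟩ ⟨by omega, hkK⟩ k.le_succ)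

theorem plus_eq_line_at_hinge (hS : IsHingeSystem K Ap Bp Am Bm H) {j k : ℕ}
    (hj : j ∈ Icc 1 K) (hkj : k ≤ j) (hjk : j ≤ k + 1) (hkK : k ≤ K) :
    phiPL K Ap Bp (H k) = Ap j + Bp j * H k := by
  obtain ⟨hj1, hjK⟩ := mem_Icc.1 hj
  have hmono : ∀ {a b}, a ≤ b → b ≤ K → H a ≤ H b := fun hab hb =>
    hS.hinge_mono (Set.mem_Iic.2 (hab.trans hb)) (Set.mem_Iic.2 hb) hab
  refine phiPL_eq_line hj (fun i h₁ h₂ => hS.plus_slope_step h₁ h₂) hS.plus_cross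
    (fun i _ hi => hmono (by omega) hkK) (fun i hi hiK => hmono (by omega) hiK.le) ?_
  have hlast : Ap K + Bp K * H K ≤ Ap K + Bp K * H k := by
    nlinarith [hS.plus_slope_last_neg, hmono hkK le_rfl]
  exact hS.plus_last_zero.symm.le.trans (hlast.trans (line_le_line_of_le_crossing hjK
    (fun i h₁ h₂ => hS.plus_slope_step (by omega) h₂) (fun i h₁ h₂ => hS.plus_cross i (by omega) h₂)
    (fun i hi hiK => hmono (by omega) hiK.le)))

theorem minus_eq_line_at_hinge (hS : IsHingeSystem K Ap Bp Am Bm H) {j k : ℕ}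
    (hj : j ∈ Icc 1 K) (hkj : k ≤ j) (hjk : j ≤ k + 1) (hkK : k ≤ K) :
    phiPL K Am Bm (-H k) = Am j + Bm j * -H k := by
  obtain ⟨hj1, hjK⟩ := mem_Icc.1 hj
  have hmono : ∀ {a b}, a ≤ b → b ≤ K → H a ≤ H b := fun hab hb =>
    hS.hinge_mono (Set.mem_Iic.2 (hab.trans hb)) (Set.mem_Iic.2 hb) hab
  rw [phiPL_neg, mul_neg, ← neg_mul]
  refine phiPL_eq_line (B := fun i => -Bm i) hj (fun i h₁ h₂ => hS.minus_slope_step h₁ h₂)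
    hS.minus_cross (fun i _ hi => hmono (by omega) hkK) (fun i hi hiK => hmono (by omega) hiK.le) ?_
  have hfirst : Am 1 + -Bm 1 * H 0 ≤ Am 1 + -Bm 1 * H k := by
    nlinarith [hS.minus_slope_first_neg, hmono (Nat.zero_le k) hkK]
  exact hS.minus_first_zero.symm.le.trans (hfirst.trans (line_le_line_of_crossing_le
    (B := fun i => -Bm i) hj1 (fun i h₁ h₂ => hS.minus_slope_step h₁ (by omega))
    (fun i h₁ h₂ => hS.minus_cross i h₁ (by omega)) (fun i _ hi => hmono (by omega) hkK)))

theorem plus_eq_zero (hS : IsHingeSystem K Ap Bp Am Bm H) {z : ℝ} (hz : H K ≤ z) :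
    phiPL K Ap Bp z = 0 := by
  refine le_antisymm (phiPL_le_iff.2 ⟨le_rfl, fun i hi => ?_⟩) (phiPL_nonneg K Ap Bp z)
  obtain ⟨hi1, hiK⟩ := mem_Icc.1 hi
  have hlast : Ap K + Bp K * z ≤ 0 := by
    nlinarith [hS.plus_slope_last_neg, hS.plus_last_zero]
  have hdom : Ap i + Bp i * z ≤ Ap K + Bp K * z :=
    line_le_line_of_crossing_le hiK (fun k h₁ h₂ => hS.plus_slope_step (by omega) h₂)
      (fun k h₁ h₂ => hS.plus_cross k (by omega) h₂)
      (fun k _ hk => (hS.hinge_mono (Set.mem_Iic.2 hk.le) (Set.mem_Iic.2 le_rfl) hk.le).trans hz)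
  exact hdom.trans hlast

theorem minus_eq_zero (hS : IsHingeSystem K Ap Bp Am Bm H) {z : ℝ} (hz : z ≤ H 0) :
    phiPL K Am Bm (-z) = 0 := by
  refine le_antisymm (phiPL_le_iff.2 ⟨le_rfl, fun i hi => ?_⟩) (phiPL_nonneg K Am Bm (-z))
  obtain ⟨hi1, hiK⟩ := mem_Icc.1 hi
  have hfirst : Am 1 + -Bm 1 * z ≤ 0 := by
    nlinarith [hS.minus_slope_first_neg, hS.minus_first_zero]
  have hdom : Am i + -Bm i * z ≤ Am 1 + -Bm 1 * z :=
    line_le_line_of_le_crossing (B := fun i => -Bm i) hi1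
      (fun k h₁ h₂ => hS.minus_slope_step h₁ (by omega))
      (fun k h₁ h₂ => hS.minus_cross k h₁ (by omega))
      (fun k _ hk => hz.trans (hS.hinge_mono (Set.mem_Iic.2 (Nat.zero_le K))
        (Set.mem_Iic.2 (by omega)) (Nat.zero_le k)))
  rw [mul_neg, ← neg_mul]
  exact hdom.trans hfirst

end IsHingeSystem

section CondExcess

variable {K : ℕ} {Ap Bp Am Bm : ℕ → ℝ} {q s z L : ℝ}

/-- With `q = p x`, `s = t*_q`, `z = f x`, `condExcess` and `condExcessSq` are the integrands of
`exc1` and `exc2`. -/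
noncomputable def condExcess (K : ℕ) (Ap Bp Am Bm : ℕ → ℝ) (q s z : ℝ) : ℝ :=
  q * (phiPL K Ap Bp z - phiPL K Ap Bp s) + (1 - q) * (phiPL K Am Bm (-z) - phiPL K Am Bm (-s))

noncomputable def condExcessAbs (K : ℕ) (Ap Bp Am Bm : ℕ → ℝ) (q s z : ℝ) : ℝ :=
  q * |phiPL K Ap Bp z - phiPL K Ap Bp s| + (1 - q) * |phiPL K Am Bm (-z) - phiPL K Am Bm (-s)|

noncomputable def condExcessSq (K : ℕ) (Ap Bp Am Bm : ℕ → ℝ) (q s z : ℝ) : ℝ :=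
  q * (phiPL K Ap Bp z - phiPL K Ap Bp s) ^ 2
    + (1 - q) * (phiPL K Am Bm (-z) - phiPL K Am Bm (-s)) ^ 2

theorem abs_condExcess_le (hq0 : 0 ≤ q) (hq1 : q ≤ 1) :
    |condExcess K Ap Bp Am Bm q s z| ≤ condExcessAbs K Ap Bp Am Bm q s z := by
  unfold condExcess condExcessAbs
  refine (abs_add_le _ _).trans_eq ?_
  rw [abs_mul, abs_mul, abs_of_nonneg hq0, abs_of_nonneg (sub_nonneg.2 hq1)]

theorem condExcessAbs_nonneg (hq0 : 0 ≤ q) (hq1 : q ≤ 1) :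
    0 ≤ condExcessAbs K Ap Bp Am Bm q s z := by
  unfold condExcessAbs
  have : 0 ≤ 1 - q := by linarith
  positivity

theorem condExcessSq_nonneg (hq0 : 0 ≤ q) (hq1 : q ≤ 1) :
    0 ≤ condExcessSq K Ap Bp Am Bm q s z := by
  unfold condExcessSq
  have : 0 ≤ 1 - q := by linarith
  positivity

theorem condExcessAbs_le (hq0 : 0 ≤ q) (hq1 : q ≤ 1) (hL0 : 0 ≤ L)
    (hL : ∀ j ∈ Icc 1 K, |Bp j| ≤ L ∧ |Bm j| ≤ L) :
    condExcessAbs K Ap Bp Am Bm q s z ≤ L * |z - s| := by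
  have hp := abs_phiPL_sub_le (A := Ap) hL0 (fun j hj => (hL j hj).1) z s
  have hm := abs_phiPL_sub_le (A := Am) hL0 (fun j hj => (hL j hj).2) (-z) (-s)
  rw [show -z - -s = -(z - s) by ring, abs_neg] at hm
  unfold condExcessAbs
  nlinarith [mul_le_mul_of_nonneg_left hp hq0, mul_le_mul_of_nonneg_left hm (sub_nonneg.2 hq1)]

theorem condExcessSq_le (hq0 : 0 ≤ q) (hq1 : q ≤ 1) (hL0 : 0 ≤ L)
    (hL : ∀ j ∈ Icc 1 K, |Bp j| ≤ L ∧ |Bm j| ≤ L) :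
    condExcessSq K Ap Bp Am Bm q s z ≤ L * |z - s| * condExcessAbs K Ap Bp Am Bm q s z := by
  have hp := abs_phiPL_sub_le (A := Ap) hL0 (fun j hj => (hL j hj).1) z s
  have hm := abs_phiPL_sub_le (A := Am) hL0 (fun j hj => (hL j hj).2) (-z) (-s)
  rw [show -z - -s = -(z - s) by ring, abs_neg] at hm
  have hsq : ∀ {u : ℝ}, |u| ≤ L * |z - s| → u ^ 2 ≤ L * |z - s| * |u| := fun hu => by
    rw [← sq_abs, sq]
    exact mul_le_mul_of_nonneg_right hu (abs_nonneg _)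
  unfold condExcessSq condExcessAbs
  nlinarith [mul_le_mul_of_nonneg_left (hsq hp) hq0,
    mul_le_mul_of_nonneg_left (hsq hm) (sub_nonneg.2 hq1)]

end CondExcess

noncomputable def hingeIndex (K : ℕ) (pp : ℕ → ℝ) (q : ℝ) : ℕ :=
  Nat.findGreatest (fun k => pp k < q) K

section HingeIndex

variable {K : ℕ} {pp : ℕ → ℝ} {q : ℝ}

theorem hingeIndex_le : hingeIndex K pp q ≤ K := Nat.findGreatest_le K

theorem pp_hingeIndex_lt (h : hingeIndex K pp q ≠ 0) : pp (hingeIndex K pp q) < q :=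
  (Nat.findGreatest_eq_iff.1 rfl).2.1 h

theorem le_pp_hingeIndex_add_one (h : hingeIndex K pp q < K) :
    q ≤ pp (hingeIndex K pp q + 1) :=
  not_lt.1 (Nat.findGreatest_is_greatest (Nat.lt_succ_self _) h)

theorem monotone_hingeIndex : Monotone (hingeIndex K pp) := fun _ _ hab =>
  Nat.findGreatest_mono_left (fun _ hk => hk.trans_le hab) K

theorem eq_hinge_hingeIndex (hK : 1 ≤ K) {H : ℕ → ℝ} {tst : ℝ → ℝ}
    (htst0 : ∀ p : ℝ, p ≤ pp 1 → tst p = H 0)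
    (htstmid : ∀ p : ℝ, ∀ k, 1 ≤ k → k ≤ K - 1 → pp k < p → p ≤ pp (k + 1) → tst p = H k)
    (htstK : ∀ p : ℝ, pp K < p → tst p = H K) (q : ℝ) :
    tst q = H (hingeIndex K pp q) := by
  rcases Nat.eq_zero_or_pos (hingeIndex K pp q) with h0 | hpos
  · rw [h0]
    have := le_pp_hingeIndex_add_one (K := K) (pp := pp) (q := q) (by omega)
    exact htst0 q (by simpa [h0] using this)
  · rcases hingeIndex_le.lt_or_eq with hlt | heq
    · exact htstmid q _ hpos (by omega) (pp_hingeIndex_lt hpos.ne')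
        (le_pp_hingeIndex_add_one hlt)
    · rw [heq]
      exact htstK q (heq ▸ pp_hingeIndex_lt hpos.ne')

theorem measurable_of_eq_hinge_hingeIndex {H : ℕ → ℝ} {tst : ℝ → ℝ}
    (htst : ∀ q, tst q = H (hingeIndex K pp q)) : Measurable tst := by
  rw [funext htst]
  exact measurable_from_nat.comp monotone_hingeIndex.measurable

end HingeIndex

namespace IsHingeSystem

variable {K : ℕ} {Ap Bp Am Bm H pp : ℕ → ℝ} {q z : ℝ}

/-- The supporting line of index `j` at `s`, combined with weights `q, 1 - q`, has slope
`q B⁺_j - (1 - q) B⁻_j`, which (C3) factors as `(B⁺_j + B⁻_j) (q - π_j)`. -/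
theorem slope_mul_le_condExcess (hS : IsHingeSystem K Ap Bp Am Bm H)
    (hC3 : ∀ k ∈ Icc 1 K, Bm k / (Bm k + Bp k) = pp k) {j : ℕ} (hj : j ∈ Icc 1 K) {s : ℝ}
    (hφ : phiPL K Ap Bp s = Ap j + Bp j * s) (hψ : phiPL K Am Bm (-s) = Am j + Bm j * -s)
    (hq0 : 0 ≤ q) (hq1 : q ≤ 1) :
    (Bp j + Bm j) * (q - pp j) * (z - s) ≤ condExcess K Ap Bp Am Bm q s z := by
  have hu : Bp j * (z - s) ≤ phiPL K Ap Bp z - phiPL K Ap Bp s := by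
    rw [hφ]; linarith [le_phiPL Ap Bp z hj]
  have hv : -Bm j * (z - s) ≤ phiPL K Am Bm (-z) - phiPL K Am Bm (-s) := by
    rw [hψ]; linarith [le_phiPL Am Bm (-z) hj]
  have hsum : Bm j + Bp j ≠ 0 := by linarith [hS.plus_slope_neg hj, hS.minus_slope_neg hj]
  have hpp : pp j * (Bm j + Bp j) = Bm j := by rw [← hC3 j hj]; field_simp
  calc (Bp j + Bm j) * (q - pp j) * (z - s)
      = q * (Bp j * (z - s)) + (1 - q) * (-Bm j * (z - s)) := by linear_combination (s - z) * hpp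
    _ ≤ condExcess K Ap Bp Am Bm q s z :=
      add_le_add (mul_le_mul_of_nonneg_left hu hq0) (mul_le_mul_of_nonneg_left hv (by linarith))

/-- Either `z` is beyond the outermost hinge on the side where one surrogate is flat (so both
parts of the excess are nonnegative), or a supporting line at the optimum `H k` bounds the excess
below by a slope of the same sign as `z - H k`. -/
theorem condExcessAbs_eq_or_slope_le (hS : IsHingeSystem K Ap Bp Am Bm H)
    (hC3 : ∀ k ∈ Icc 1 K, Bm k / (Bm k + Bp k) = pp k) (hq0 : 0 ≤ q) (hq1 : q ≤ 1) {k : ℕ}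
    (hkK : k ≤ K) (hlo : k ≠ 0 → pp k < q) (hhi : k < K → q ≤ pp (k + 1)) :
    condExcessAbs K Ap Bp Am Bm q (H k) z = condExcess K Ap Bp Am Bm q (H k) z ∨
      ∃ j ∈ Icc 1 K, (q - pp j) * (z - H k) ≤ 0 ∧
        (Bp j + Bm j) * (q - pp j) * (z - H k) ≤ condExcess K Ap Bp Am Bm q (H k) z := by
  rcases le_total (H k) z with hz | hz
  · rcases hkK.lt_or_eq with hkK | hkK
    · have hj : k + 1 ∈ Icc 1 K := mem_Icc.2 ⟨by omega, hkK⟩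
      exact Or.inr ⟨k + 1, hj,
        mul_nonpos_of_nonpos_of_nonneg (sub_nonpos.2 (hhi hkK)) (sub_nonneg.2 hz),
        hS.slope_mul_le_condExcess hC3 hj (hS.plus_eq_line_at_hinge hj k.le_succ le_rfl hkK.le)
          (hS.minus_eq_line_at_hinge hj k.le_succ le_rfl hkK.le) hq0 hq1⟩
    · rw [hkK] at hz ⊢
      have hv : 0 ≤ phiPL K Am Bm (-z) - phiPL K Am Bm (-H K) :=
        sub_nonneg.2 (phiPL_antitone (fun j hj => (hS.minus_slope_neg hj).le) (neg_le_neg hz))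
      left
      simp only [condExcessAbs, condExcess, hS.plus_eq_zero hz, hS.plus_eq_zero le_rfl, sub_self,
        abs_zero, abs_of_nonneg hv]
  · rcases Nat.eq_zero_or_pos k with rfl | hk0
    · have hu : 0 ≤ phiPL K Ap Bp z - phiPL K Ap Bp (H 0) :=
        sub_nonneg.2 (phiPL_antitone (fun j hj => (hS.plus_slope_neg hj).le) hz)
      left
      simp only [condExcessAbs, condExcess, hS.minus_eq_zero hz, hS.minus_eq_zero le_rfl,
        sub_self, abs_zero, abs_of_nonneg hu]
    · have hj : k ∈ Icc 1 K := mem_Icc.2 ⟨hk0, hkK⟩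
      exact Or.inr ⟨k, hj,
        mul_nonpos_of_nonneg_of_nonpos (sub_nonneg.2 (hlo hk0.ne').le) (sub_nonpos.2 hz),
        hS.slope_mul_le_condExcess hC3 hj (hS.plus_eq_line_at_hinge hj le_rfl k.le_succ hkK)
          (hS.minus_eq_line_at_hinge hj le_rfl k.le_succ hkK) hq0 hq1⟩

theorem condExcess_nonneg (hS : IsHingeSystem K Ap Bp Am Bm H)
    (hC3 : ∀ k ∈ Icc 1 K, Bm k / (Bm k + Bp k) = pp k) (hq0 : 0 ≤ q) (hq1 : q ≤ 1) :
    0 ≤ condExcess K Ap Bp Am Bm q (H (hingeIndex K pp q)) z := by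
  rcases hS.condExcessAbs_eq_or_slope_le (z := z) hC3 hq0 hq1 hingeIndex_le pp_hingeIndex_lt
    le_pp_hingeIndex_add_one with heq | ⟨j, hj, hsign, hle⟩
  · exact heq ▸ condExcessAbs_nonneg hq0 hq1
  · refine le_trans ?_ hle
    rw [mul_assoc]
    exact mul_nonneg_of_nonpos_of_nonpos
      (by linarith [hS.plus_slope_neg hj, hS.minus_slope_neg hj]) hsign

theorem condExcessAbs_le_of_forall_lt_abs_sub (hS : IsHingeSystem K Ap Bp Am Bm H)
    (hC3 : ∀ k ∈ Icc 1 K, Bm k / (Bm k + Bp k) = pp k) (hq0 : 0 ≤ q) (hq1 : q ≤ 1) {L c t : ℝ}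
    (hL0 : 0 ≤ L) (hL : ∀ j ∈ Icc 1 K, |Bp j| ≤ L ∧ |Bm j| ≤ L)
    (hc : ∀ j ∈ Icc 1 K, c ≤ -(Bp j + Bm j)) (hc0 : 0 < c) (ht : 0 < t)
    (hfar : ∀ j ∈ Icc 1 K, t < |q - pp j|) :
    condExcessAbs K Ap Bp Am Bm q (H (hingeIndex K pp q)) z
      ≤ (1 + L / (c * t)) * condExcess K Ap Bp Am Bm q (H (hingeIndex K pp q)) z := by
  set k := hingeIndex K pp q
  have hE0 : 0 ≤ condExcess K Ap Bp Am Bm q (H k) z := hS.condExcess_nonneg hC3 hq0 hq1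
  have hLct : 0 ≤ L / (c * t) := by positivity
  rcases hS.condExcessAbs_eq_or_slope_le (z := z) hC3 hq0 hq1 hingeIndex_le pp_hingeIndex_lt
    le_pp_hingeIndex_add_one with heq | ⟨j, hj, hsign, hle⟩
  · rw [heq]
    exact le_mul_of_one_le_left hE0 (by linarith)
  · have hgrowth : c * t * |z - H k| ≤ condExcess K Ap Bp Am Bm q (H k) z := by
      refine le_trans ?_ hle
      calc c * t * |z - H k| ≤ -(Bp j + Bm j) * (|q - pp j| * |z - H k|) := by
            rw [mul_assoc]
            gcongr
            · linarith [hc j hj]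
            · exact hc j hj
            · exact (hfar j hj).le
        _ = (Bp j + Bm j) * (q - pp j) * (z - H k) := by
            rw [← abs_mul, abs_of_nonpos hsign]
            ring
    calc condExcessAbs K Ap Bp Am Bm q (H k) z ≤ L * |z - H k| := condExcessAbs_le hq0 hq1 hL0 hL
      _ = L / (c * t) * (c * t * |z - H k|) := by field_simp
      _ ≤ L / (c * t) * condExcess K Ap Bp Am Bm q (H k) z := by gcongr
      _ ≤ (1 + L / (c * t)) * condExcess K Ap Bp Am Bm q (H k) z :=
          mul_le_mul_of_nonneg_right (by linarith) hE0

end IsHingeSystem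

theorem pp_sub_pp_pred_pos {K : ℕ} {pp : ℕ → ℝ} (hpp0' : pp 0 = 0) (hppK1 : pp (K + 1) = 1)
    (hpp0 : 0 < pp 1) (hppK : pp K < 1) (hppmono : ∀ k, 1 ≤ k → k < K → pp k < pp (k + 1)) :
    ∀ j ∈ Icc 1 (K + 1), 0 < pp j - pp (j - 1) := by
  intro j hj
  obtain ⟨hj1, hjK⟩ := mem_Icc.1 hj
  rcases (by omega : j = 1 ∨ j = K + 1 ∨ (2 ≤ j ∧ j ≤ K)) with rfl | rfl | ⟨hj2, hjK'⟩
  · simpa [hpp0'] using hpp0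
  · simpa [hppK1] using hppK
  · have := hppmono (j - 1) (by omega) (by omega)
    rw [Nat.sub_add_cancel (by omega)] at this
    linarith

theorem exists_pos_forall_le_of_forall_pos {ι : Type*} (s : Finset ι) {f : ι → ℝ}
    (hf : ∀ j ∈ s, 0 < f j) : ∃ c, 0 < c ∧ ∀ j ∈ s, c ≤ f j := by
  rcases s.eq_empty_or_nonempty with rfl | hs
  · exact ⟨1, one_pos, by simp⟩
  · obtain ⟨j₀, hj₀, hmin⟩ := s.exists_min_image f hs
    exact ⟨f j₀, hf j₀ hj₀, hmin⟩

theorem exists_pos_forall_ge {ι : Type*} (s : Finset ι) (f : ι → ℝ) :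
    ∃ C, 0 < C ∧ ∀ j ∈ s, f j ≤ C := by
  obtain ⟨M, hM⟩ := (s.image f).exists_le
  exact ⟨max M 1, by positivity, fun j hj => (hM _ (mem_image_of_mem f hj)).trans (le_max_left _ _)⟩

theorem exists_le_mul_rpow_of_forall_le {α T N a b D : ℝ} (hα : 0 < α) (hT : 0 < T) (hN : 0 < N)
    (ha : 0 < a) (hb : 0 ≤ b) (hD : 0 ≤ D) :
    ∃ C, 0 < C ∧ ∀ E₁ E₂ : ℝ, 0 ≤ E₁ → E₁ ≤ N →
      (∀ t, 0 < t → t < T → E₂ ≤ a * E₁ + b / t * E₁ + D * t ^ α) →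
        E₂ ≤ C * E₁ ^ (α / (1 + α)) := by
  set N' := N ^ (1 + α)⁻¹
  have hN' : 0 < N' := by positivity
  set l := T / (2 * N')
  have hl : 0 < l := by positivity
  refine ⟨a * N' + b / l + D * l ^ α, by positivity, fun E₁ E₂ hE₁ hE₁N hE => ?_⟩
  rcases hE₁.eq_or_lt with rfl | hpos
  · rw [Real.zero_rpow (by positivity), mul_zero]
    have hlim : Tendsto (fun t : ℝ => D * t ^ α) (𝓝[>] 0) (𝓝 (D * 0 ^ α)) :=
      ((continuous_const.mul (Real.continuous_rpow_const hα.le)).tendsto 0).mono_left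
        nhdsWithin_le_nhds
    rw [Real.zero_rpow hα.ne', mul_zero] at hlim
    refine ge_of_tendsto hlim (mem_of_superset (Ioo_mem_nhdsGT hT) fun t ht => ?_)
    simpa using hE t ht.1 ht.2
  · set t₀ := E₁ ^ (1 + α)⁻¹
    have ht₀ : 0 < t₀ := by positivity
    have ht₀N : t₀ ≤ N' := Real.rpow_le_rpow hE₁ hE₁N (by positivity)
    have hsplit : E₁ = t₀ * E₁ ^ (α / (1 + α)) := by
      rw [← Real.rpow_add hpos, show (1 + α)⁻¹ + α / (1 + α) = 1 by field_simp, Real.rpow_one]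
    have hpow : t₀ ^ α = E₁ ^ (α / (1 + α)) := by
      rw [← Real.rpow_mul hE₁, inv_mul_eq_div]
    have ht : l * t₀ < T := by
      calc l * t₀ ≤ l * N' := by gcongr
        _ = T / 2 := by simp only [l]; field_simp
        _ < T := by linarith
    calc E₂ ≤ a * E₁ + b / (l * t₀) * E₁ + D * (l * t₀) ^ α := hE _ (by positivity) ht
      _ = a * (t₀ * E₁ ^ (α / (1 + α))) + b / (l * t₀) * (t₀ * E₁ ^ (α / (1 + α)))
          + D * (l ^ α * t₀ ^ α) := by rw [← hsplit, Real.mul_rpow hl.le ht₀.le]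
      _ = (a * t₀ + b / l + D * l ^ α) * E₁ ^ (α / (1 + α)) := by
          rw [hpow]; field_simp
      _ ≤ (a * N' + b / l + D * l ^ α) * E₁ ^ (α / (1 + α)) := by gcongr

section Integrals

variable {X : Type*} [MeasurableSpace X] {μ : Measure X}

theorem integral_le_mul_integral_add_mul_measureReal_compl [IsFiniteMeasure μ] {F G : X → ℝ}
    {S : Set X} {κ M : ℝ} (hS : MeasurableSet S) (hF : Integrable F μ) (hG : Integrable G μ)
    (hG0 : ∀ x, 0 ≤ G x) (hκ : 0 ≤ κ) (hFS : ∀ x ∈ S, F x ≤ κ * G x) (hFM : ∀ x, F x ≤ M) :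
    ∫ x, F x ∂μ ≤ κ * ∫ x, G x ∂μ + M * μ.real Sᶜ := by
  have hin : ∫ x in S, F x ∂μ ≤ κ * ∫ x, G x ∂μ :=
    calc ∫ x in S, F x ∂μ ≤ ∫ x in S, κ * G x ∂μ :=
          setIntegral_mono_on hF.integrableOn (hG.const_mul κ).integrableOn hS hFS
      _ = κ * ∫ x in S, G x ∂μ := integral_const_mul κ _
      _ ≤ κ * ∫ x, G x ∂μ :=
          mul_le_mul_of_nonneg_left (setIntegral_le_integral hG (Eventually.of_forall hG0)) hκ
  have hout : ∫ x in Sᶜ, F x ∂μ ≤ M * μ.real Sᶜ :=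
    calc ∫ x in Sᶜ, F x ∂μ ≤ ∫ _ in Sᶜ, M ∂μ :=
          setIntegral_mono_on hF.integrableOn (integrableOn_const (measure_ne_top μ _))
            hS.compl fun x _ => hFM x
      _ = M * μ.real Sᶜ := by rw [setIntegral_const, smul_eq_mul, mul_comm]
  rw [← integral_add_compl hS hF]
  linarith

theorem measureReal_compl_iInter_lt_abs_sub_le (s : Finset ℕ) {p : X → ℝ} {pp : ℕ → ℝ}
    {t ε : ℝ} (hε : 0 ≤ ε) (hmargin : ∀ j ∈ s, μ {x | |p x - pp j| ≤ t} ≤ ENNReal.ofReal ε) :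
    μ.real (⋂ j ∈ s, {x | t < |p x - pp j|})ᶜ ≤ s.card * ε := by
  simp only [Set.compl_iInter, Set.compl_ofPred, not_lt]
  exact (measureReal_biUnion_finset_le s _).trans <| (sum_le_sum fun j hj =>
    (ENNReal.toReal_le_of_le_ofReal hε (hmargin j hj) : μ.real _ ≤ ε)).trans_eq (by simp)

variable {K : ℕ} {Ap Bp Am Bm H pp : ℕ → ℝ} {tst : ℝ → ℝ} {p f : X → ℝ} {L m : ℝ}

theorem measurable_condExcess {s : X → ℝ} (hp : Measurable p) (hs : Measurable s)
    (hf : Measurable f) : Measurable fun x => condExcess K Ap Bp Am Bm (p x) (s x) (f x) := by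
  unfold condExcess
  fun_prop

theorem measurable_condExcessSq {s : X → ℝ} (hp : Measurable p) (hs : Measurable s)
    (hf : Measurable f) : Measurable fun x => condExcessSq K Ap Bp Am Bm (p x) (s x) (f x) := by
  unfold condExcessSq
  fun_prop

theorem exc1_le [IsProbabilityMeasure μ] (hp0 : ∀ x, 0 ≤ p x) (hp1 : ∀ x, p x ≤ 1) (hL0 : 0 ≤ L)
    (hL : ∀ j ∈ Icc 1 K, |Bp j| ≤ L ∧ |Bm j| ≤ L) (hm : ∀ x, L * |f x - tst (p x)| ≤ m) :
    exc1 μ K Ap Bp Am Bm tst p f ≤ m := by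
  have hbound : ∀ x, ‖condExcess K Ap Bp Am Bm (p x) (tst (p x)) (f x)‖ ≤ m := fun x =>
    ((abs_condExcess_le (hp0 x) (hp1 x)).trans (condExcessAbs_le (hp0 x) (hp1 x) hL0 hL)).trans
      (hm x)
  show ∫ x, condExcess K Ap Bp Am Bm (p x) (tst (p x)) (f x) ∂μ ≤ m
  simpa using (le_abs_self _).trans
    (norm_integral_le_of_norm_le_const (μ := μ) (Eventually.of_forall hbound))

namespace IsHingeSystem

theorem exc1_nonneg (hS : IsHingeSystem K Ap Bp Am Bm H)
    (hC3 : ∀ k ∈ Icc 1 K, Bm k / (Bm k + Bp k) = pp k) (htst : ∀ q, tst q = H (hingeIndex K pp q))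
    (hp0 : ∀ x, 0 ≤ p x) (hp1 : ∀ x, p x ≤ 1) : 0 ≤ exc1 μ K Ap Bp Am Bm tst p f :=
  integral_nonneg fun x => by
    change 0 ≤ condExcess K Ap Bp Am Bm (p x) (tst (p x)) (f x)
    exact htst (p x) ▸ hS.condExcess_nonneg hC3 (hp0 x) (hp1 x)

theorem exc2_le [IsFiniteMeasure μ] (hS : IsHingeSystem K Ap Bp Am Bm H)
    (hC3 : ∀ k ∈ Icc 1 K, Bm k / (Bm k + Bp k) = pp k) (htst : ∀ q, tst q = H (hingeIndex K pp q))
    (hp : Measurable p) (hp0 : ∀ x, 0 ≤ p x) (hp1 : ∀ x, p x ≤ 1) (hf : Measurable f)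
    (hL0 : 0 ≤ L) (hL : ∀ j ∈ Icc 1 K, |Bp j| ≤ L ∧ |Bm j| ≤ L) {c t ε : ℝ}
    (hc : ∀ j ∈ Icc 1 K, c ≤ -(Bp j + Bm j)) (hc0 : 0 < c) (ht : 0 < t)
    (hm0 : 0 ≤ m) (hm : ∀ x, L * |f x - tst (p x)| ≤ m) (hε : 0 ≤ ε)
    (hmargin : ∀ j ∈ Icc 1 K, μ {x | |p x - pp j| ≤ t} ≤ ENNReal.ofReal ε) :
    exc2 μ K Ap Bp Am Bm tst p f
      ≤ m * (1 + L / (c * t)) * exc1 μ K Ap Bp Am Bm tst p f + m ^ 2 * (K * ε) := by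
  set g := fun x => condExcess K Ap Bp Am Bm (p x) (tst (p x)) (f x)
  set a := fun x => condExcessAbs K Ap Bp Am Bm (p x) (tst (p x)) (f x)
  set h := fun x => condExcessSq K Ap Bp Am Bm (p x) (tst (p x)) (f x)
  set S := ⋂ j ∈ Icc 1 K, {x | t < |p x - pp j|}
  have hg0 : ∀ x, 0 ≤ g x := fun x => by
    simp only [g, htst]
    exact hS.condExcess_nonneg hC3 (hp0 x) (hp1 x)
  have ha : ∀ x, a x ≤ m := fun x => (condExcessAbs_le (hp0 x) (hp1 x) hL0 hL).trans (hm x)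
  have hh : ∀ x, h x ≤ m * a x := fun x =>
    (condExcessSq_le (hp0 x) (hp1 x) hL0 hL).trans
      (mul_le_mul_of_nonneg_right (hm x) (condExcessAbs_nonneg (hp0 x) (hp1 x)))
  have hhM : ∀ x, h x ≤ m ^ 2 := fun x =>
    (hh x).trans (by rw [sq]; exact mul_le_mul_of_nonneg_left (ha x) hm0)
  have hfar : ∀ x ∈ S, h x ≤ m * (1 + L / (c * t)) * g x := fun x hx => by
    have hx' : ∀ j ∈ Icc 1 K, t < |p x - pp j| := by simpa [S] using hx
    refine (hh x).trans ?_
    rw [mul_assoc]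
    gcongr
    simp only [a, g, htst]
    exact hS.condExcessAbs_le_of_forall_lt_abs_sub hC3 (hp0 x) (hp1 x) hL0 hL hc hc0 ht hx'
  have hs : Measurable fun x => tst (p x) := (measurable_of_eq_hinge_hingeIndex htst).comp hp
  have hgi : Integrable g μ :=
    Integrable.of_bound (measurable_condExcess hp hs hf).aestronglyMeasurable m
      (Eventually.of_forall fun x => (abs_condExcess_le (hp0 x) (hp1 x)).trans (ha x))
  have hhi : Integrable h μ :=
    Integrable.of_bound (measurable_condExcessSq hp hs hf).aestronglyMeasurable (m ^ 2)
      (Eventually.of_forall fun x => by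
        rw [Real.norm_eq_abs, abs_of_nonneg (condExcessSq_nonneg (hp0 x) (hp1 x))]
        exact hhM x)
  have hSm : MeasurableSet S := MeasurableSet.biInter (Icc 1 K).countable_toSet fun j _ =>
    measurableSet_lt measurable_const (by fun_prop)
  show ∫ x, h x ∂μ ≤ m * (1 + L / (c * t)) * ∫ x, g x ∂μ + m ^ 2 * (K * ε)
  calc ∫ x, h x ∂μ ≤ m * (1 + L / (c * t)) * ∫ x, g x ∂μ + m ^ 2 * μ.real Sᶜ :=
        integral_le_mul_integral_add_mul_measureReal_compl hSm hhi hgi hg0 (by positivity) hfar hhM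
    _ ≤ _ := by
        gcongr
        exact (measureReal_compl_iInter_lt_abs_sub_le (Icc 1 K) hε hmargin).trans_eq (by simp)

end IsHingeSystem

end Integrals

/-- Bernstein-class property: under conditions (C1)-(C3) and the margin condition with
constants `A ≥ 1`, `α > 0`, for every `B > 0` there is `B′ > 0` such that every measurable
`f` with `|f| ≤ B` satisfies `E₂(f) ≤ B′·(E₁(f))^{α/(1+α)}`. -/
theorem stmt_15 {X : Type*} [MeasurableSpace X] (μ : Measure X) [IsProbabilityMeasure μ]
    (K : ℕ) (hK : 1 ≤ K) (pp : ℕ → ℝ)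
    (hpp0' : pp 0 = 0) (hppK1 : pp (K + 1) = 1)
    (hpp0 : 0 < pp 1) (hppK : pp K < 1)
    (hppmono : ∀ k, 1 ≤ k → k < K → pp k < pp (k + 1))
    (Ap Bp Am Bm : ℕ → ℝ) (H Hm : ℕ → ℝ)
    (hH0 : H 0 = Am 1 / Bm 1)
    (hHmid : ∀ k, 1 ≤ k → k ≤ K - 1 → H k = (Ap k - Ap (k + 1)) / (Bp (k + 1) - Bp k))
    (hHK : H K = -Ap K / Bp K)
    (hHm : ∀ k, 1 ≤ k → k ≤ K - 1 → Hm k = (Am k - Am (k + 1)) / (Bm (k + 1) - Bm k))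
    (hC1p : ∀ k, 1 ≤ k → k < K → Bp k < Bp (k + 1)) (hC1pK : Bp K < 0)
    (hC1m : ∀ k, 1 ≤ k → k < K → Bm (k + 1) < Bm k) (hC1m1 : Bm 1 < 0)
    (hC2a : ∀ k, 1 ≤ k → k ≤ K - 1 → -Hm k = H k)
    (hC2b : ∀ k, k < K → H k < H (k + 1))
    (hC3 : ∀ k ∈ Finset.Icc 1 K, Bm k / (Bm k + Bp k) = pp k)
    -- pointwise surrogate-optimal value
    (tst : ℝ → ℝ)
    (htst0 : ∀ p : ℝ, p ≤ pp 1 → tst p = H 0)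
    (htstmid : ∀ p : ℝ, ∀ k, 1 ≤ k → k ≤ K - 1 → pp k < p → p ≤ pp (k + 1) → tst p = H k)
    (htstK : ∀ p : ℝ, pp K < p → tst p = H K)
    -- conditional class probability
    (p : X → ℝ) (hpmeas : Measurable p) (hp0 : ∀ x, 0 ≤ p x) (hp1 : ∀ x, p x ≤ 1)
    -- margin condition with constants A ≥ 1 and α > 0
    (A α : ℝ) (hA : 1 ≤ A) (hα : 0 < α)
    (hmargin : ∀ k ∈ Finset.Icc 1 K, ∀ t : ℝ, 0 ≤ t →
      (∀ j ∈ Finset.Icc 1 (K + 1), t < pp j - pp (j - 1)) →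
      μ {x | |p x - pp k| ≤ t} ≤ ENNReal.ofReal (A * t ^ α)) :
    ∀ B : ℝ, 0 < B → ∃ B' : ℝ, 0 < B' ∧
      ∀ f : X → ℝ, Measurable f → (∀ x, |f x| ≤ B) →
        exc2 μ K Ap Bp Am Bm tst p f
          ≤ B' * exc1 μ K Ap Bp Am Bm tst p f ^ (α / (1 + α)) := by
  intro B hB
  have hS := isHingeSystem_of_conditions hH0 hHmid hHK hHm hC1p hC1pK hC1m hC1m1 hC2a hC2b
  have htst := eq_hinge_hingeIndex hK htst0 htstmid htstK
  obtain ⟨T, hT, hTgap⟩ := exists_pos_forall_le_of_forall_pos _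
    (pp_sub_pp_pred_pos hpp0' hppK1 hpp0 hppK hppmono)
  obtain ⟨c, hc0, hc⟩ := exists_pos_forall_le_of_forall_pos (Icc 1 K) fun j hj =>
    neg_pos.2 (add_neg (hS.plus_slope_neg hj) (hS.minus_slope_neg hj))
  obtain ⟨L, hL0, hL⟩ := exists_pos_forall_ge (Icc 1 K) fun j => max |Bp j| |Bm j|
  replace hL : ∀ j ∈ Icc 1 K, |Bp j| ≤ L ∧ |Bm j| ≤ L := fun j hj => max_le_iff.1 (hL j hj)
  obtain ⟨R, hR0, hR⟩ := exists_pos_forall_ge (range (K + 1)) fun k => |H k|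
  set m := L * (B + R)
  have hm0 : 0 < m := by positivity
  obtain ⟨C, hC0, hC⟩ := exists_le_mul_rpow_of_forall_le hα hT hm0 hm0
    (b := m * L / c) (D := m ^ 2 * K * A) (by positivity) (by positivity)
  refine ⟨C, hC0, fun f hf hfB => ?_⟩
  have hm : ∀ x, L * |f x - tst (p x)| ≤ m := fun x => by
    rw [htst]
    refine mul_le_mul_of_nonneg_left ((abs_sub _ _).trans (add_le_add (hfB x) ?_)) hL0.le
    exact hR _ (mem_range.2 (Nat.lt_succ_of_le hingeIndex_le))
  refine hC _ _ (hS.exc1_nonneg hC3 htst hp0 hp1) (exc1_le hp0 hp1 hL0.le hL hm) fun t ht htT => ?_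
  calc exc2 μ K Ap Bp Am Bm tst p f
      ≤ m * (1 + L / (c * t)) * exc1 μ K Ap Bp Am Bm tst p f + m ^ 2 * (K * (A * t ^ α)) :=
        hS.exc2_le hC3 htst hpmeas hp0 hp1 hf hL0.le hL hc hc0 ht hm0.le hm (by positivity)
          fun j hj => hmargin j hj t ht.le fun i hi => htT.trans_le (hTgap i hi)
    _ = _ := by field_simp
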